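/- For the linear Poisson bracket on ℂ[x,y] induced on 1-dimensional representations by the double Poisson tensor x ∂/∂x ∂/∂x + y ∂/∂x ∂/∂y, namely tr(P₁) = π₁ = y ∂/∂x ∧ ∂/∂y, the higher Poisson cohomology vanishes: H^i_{π₁}(ℂ[x,y]) = 0 for all i ≥ 2; equivalently, every 2-vector field F ∂/∂x ∧ ∂/∂y is the image under d_{π₁} of some vector field, i.e., for every polynomial F ∈ ℂ[x,y] there exist f,g ∈ ℂ[x,y] with y(∂f/∂x + ∂g/∂y) − g = F. -/

import Mathlib

noncomputable section
open MvPolynomial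
abbrev R2 := MvPolynomial (Fin 2) ℂ
def Yv : R2 := X 1

lemma key (n m : ℕ) (a : ℂ) :
    ∃ f g : R2, Yv * (pderiv 0 f + pderiv 1 g) - g = C a * X 0 ^ n * X 1 ^ m := by
  match m with
  | 0 =>
    refine ⟨0, -(C a * X 0 ^ n), ?_⟩
    simp [Derivation.leibniz_pow, Yv]
  | 1 =>
    refine ⟨C (a / ((n:ℂ)+1)) * X 0 ^ (n+1), 0, ?_⟩
    have h : ((n:ℂ)+1) ≠ 0 := Nat.cast_add_one_ne_zero n
    have h' : C (a/((n:ℂ)+1)) * (C (n:ℂ) + 1) = (C a : R2) := by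
      rw [← C_1, ← C_add, ← C_mul, div_mul_cancel₀ a h]
    simp only [Derivation.leibniz_pow, Yv, pderiv_C_mul, map_zero, add_zero, sub_zero,
      pderiv_X_self, Nat.add_sub_cancel, smul_eq_mul, nsmul_eq_mul, mul_one]
    rw [(map_natCast (C : ℂ →+* R2) (n+1)).symm, Nat.cast_add, Nat.cast_one, C_add, C_1]
    linear_combination (X 1 * X 0 ^ n : R2) * h'
  | (k+2) =>
    refine ⟨0, C (a / ((k:ℂ)+1)) * X 0 ^ n * X 1 ^ (k+2), ?_⟩
    have h : ((k:ℂ)+1) ≠ 0 := Nat.cast_add_one_ne_zero k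
    have h' : C (a/((k:ℂ)+1)) * (C (k:ℂ) + 1) = (C a : R2) := by
      rw [← C_1, ← C_add, ← C_mul, div_mul_cancel₀ a h]
    simp only [Derivation.leibniz_pow, Yv, pderiv_C_mul, map_zero, zero_add, mul_assoc,
      smul_eq_mul, nsmul_eq_mul]
    simp [Derivation.leibniz_pow]
    rw [show ((k:R2)) = C (k:ℂ) from (map_natCast C k).symm]
    linear_combination (X 0 ^ n * X 1 ^ (k+2) : R2) * h'

/-- For `π₁ = y ∂/∂x ∧ ∂/∂y` on `ℂ[x,y]`, `H²_{π₁}` vanishes: every 2-vector field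
`F ∂/∂x ∧ ∂/∂y` is the Lichnerowicz coboundary of some vector field `f∂/∂x + g∂/∂y`,
i.e. `y(∂f/∂x + ∂g/∂y) − g = F`. -/
theorem stmt_17 (F : R2) :
    ∃ f g : R2, Yv * (pderiv 0 f + pderiv 1 g) - g = F := by
  induction F using MvPolynomial.induction_on' with
  | add p q hp hq =>
    obtain ⟨f, g, hf⟩ := hp
    obtain ⟨f', g', hg⟩ := hq
    exact ⟨f + f', g + g', by rw [map_add, map_add]; rw [← hf, ← hg]; ring⟩
  | monomial s a =>
    have : (monomial s) a = C a * X 0 ^ (s 0) * X 1 ^ (s 1) := by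
      rw [monomial_eq, Finsupp.prod_fintype _ _ (by simp), Fin.prod_univ_two, mul_assoc]
    rw [this]
    exact key _ _ _
end
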